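/- Strengthened product uncertainty relation (Maccone–Pati): for self-adjoint A, B, a unit vector ψ with ΔA > 0, ΔB > 0, and a unit vector ψ⊥ orthogonal to ψ, if 1 − (1/2)|⟨ψ, (A/ΔA ± iB/ΔB)ψ⊥⟩|² > 0 then ΔA·ΔB ≥ (±(i/2)⟨ψ,[A,B]ψ⟩) / (1 − (1/2)|⟨ψ,(A/ΔA ± iB/ΔB)ψ⊥⟩|²), with the sign chosen so the numerator is nonnegative. -/

import Mathlib

/-!
Let `u = (A - ⟨A⟩)ψ / ΔA` and `v = (B - ⟨B⟩)ψ / ΔB`; these are unit vectors, and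
`‖u ∓ i v‖² = 2 ∓ (i/ΔAΔB)⟨ψ,[A,B]ψ⟩`. Since `ψ⊥ ⊥ ψ`, the centring terms drop out of
`⟨ψ, (A/ΔA ± iB/ΔB)ψ⊥⟩ = ⟨u ∓ i v, ψ⊥⟩`, so Cauchy–Schwarz against the unit vector `ψ⊥`
bounds its squared modulus by `‖u ∓ i v‖²`; rearranging gives the inequality.
-/

open Complex

local notation "⟪" x ", " y "⟫" => @inner ℂ _ _ x y

/-- Standard deviation of a (self-adjoint) operator `A` in state `ψ`. -/
noncomputable def sdev {E : Type*} [NormedAddCommGroup E] [InnerProductSpace ℂ E]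
    (A : E →ₗ[ℂ] E) (ψ : E) : ℝ :=
  Real.sqrt ((⟪ψ, A (A ψ)⟫).re - ((⟪ψ, A ψ⟫).re) ^ 2)

open ComplexConjugate

section

variable {E : Type*} [NormedAddCommGroup E] [InnerProductSpace ℂ E] {A B : E →ₗ[ℂ] E} {ψ : E}

theorem norm_sub_ofReal_mul_I_smul_sq (u v : E) (t : ℝ) :
    ‖u - ((t : ℂ) * I) • v‖ ^ 2 = ‖u‖ ^ 2 + t ^ 2 * ‖v‖ ^ 2 + 2 * t * (⟪u, v⟫).im := by
  rw [@norm_sub_sq ℂ, inner_smul_right, norm_smul, norm_mul, Complex.norm_real, norm_I]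
  simp only [RCLike.re_to_complex, mul_re, mul_im, ofReal_re, ofReal_im, I_re, I_im,
    Real.norm_eq_abs, mul_one, mul_pow, sq_abs]
  ring

noncomputable def deviation (A : E →ₗ[ℂ] E) (ψ : E) : E := A ψ - ⟪ψ, A ψ⟫ • ψ

theorem LinearMap.IsSymmetric.conj_inner_self_apply (hA : A.IsSymmetric) (ψ : E) :
    conj ⟪ψ, A ψ⟫ = ⟪ψ, A ψ⟫ := by
  rw [inner_conj_symm, hA]

theorem inner_deviation_deviation (hA : A.IsSymmetric) (hψ : ‖ψ‖ = 1) :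
    ⟪deviation A ψ, deviation B ψ⟫ = ⟪ψ, A (B ψ)⟫ - ⟪ψ, A ψ⟫ * ⟪ψ, B ψ⟫ := by
  simp only [deviation, inner_sub_left, inner_sub_right, inner_smul_left, inner_smul_right,
    inner_self_eq_one_of_norm_eq_one hψ, hA _ (B ψ), hA ψ ψ, hA.conj_inner_self_apply]
  ring

theorem norm_deviation_sq (hA : A.IsSymmetric) (hψ : ‖ψ‖ = 1) :
    ‖deviation A ψ‖ ^ 2 = (⟪ψ, A (A ψ)⟫).re - (⟪ψ, A ψ⟫).re ^ 2 := by
  have him : (⟪ψ, A ψ⟫).im = 0 := hA.im_inner_self_apply ψ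
  rw [← inner_self_eq_norm_sq (𝕜 := ℂ), inner_deviation_deviation hA hψ, RCLike.re_to_complex,
    sub_re, mul_re, him, mul_zero, sub_zero, pow_two]

theorem sdev_eq_norm_deviation (hA : A.IsSymmetric) (hψ : ‖ψ‖ = 1) :
    sdev A ψ = ‖deviation A ψ‖ := by
  rw [sdev, ← norm_deviation_sq hA hψ, Real.sqrt_sq (norm_nonneg _)]

theorem im_inner_deviation_deviation (hA : A.IsSymmetric) (hB : B.IsSymmetric)
    (hψ : ‖ψ‖ = 1) : (⟪deviation A ψ, deviation B ψ⟫).im = (⟪ψ, A (B ψ)⟫).im := by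
  have hAim : (⟪ψ, A ψ⟫).im = 0 := hA.im_inner_self_apply ψ
  have hBim : (⟪ψ, B ψ⟫).im = 0 := hB.im_inner_self_apply ψ
  rw [inner_deviation_deviation hA hψ, sub_im, mul_im, hAim, hBim, mul_zero, zero_mul, add_zero,
    sub_zero]

theorem inner_deviation_left_of_inner_eq_zero {φ : E} (hA : A.IsSymmetric) (h : ⟪ψ, φ⟫ = 0) :
    ⟪deviation A ψ, φ⟫ = ⟪ψ, A φ⟫ := by
  rw [deviation, inner_sub_left, inner_smul_left, h, mul_zero, sub_zero, hA]

theorem re_I_div_two_mul_inner_commutator (hA : A.IsSymmetric) (hB : B.IsSymmetric) (ψ : E) :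
    (I / 2 * ⟪ψ, A (B ψ) - B (A ψ)⟫).re = -(⟪ψ, A (B ψ)⟫).im := by
  have hBA : ⟪ψ, B (A ψ)⟫ = conj ⟪ψ, A (B ψ)⟫ := by rw [← hB, ← hA, inner_conj_symm]
  rw [inner_sub_right, hBA, sub_conj]
  simp

theorem norm_inv_sdev_smul_deviation (hA : A.IsSymmetric) (hψ : ‖ψ‖ = 1) (h : 0 < sdev A ψ) :
    ‖((sdev A ψ : ℂ))⁻¹ • deviation A ψ‖ = 1 := by
  rw [norm_smul, norm_inv, Complex.norm_real, Real.norm_of_nonneg h.le,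
    ← sdev_eq_norm_deviation hA hψ, inv_mul_cancel₀ h.ne']

theorem norm_inner_sub_ofReal_mul_I_smul_sq_le {u v w : E} (hu : ‖u‖ = 1) (hv : ‖v‖ = 1)
    (hw : ‖w‖ = 1) {t : ℝ} (ht : t ^ 2 = 1) : ‖⟪u - ((t : ℂ) * I) • v, w⟫‖ ^ 2 ≤ 2 + 2 * t * (⟪u, v⟫).im :=
  calc ‖⟪u - ((t : ℂ) * I) • v, w⟫‖ ^ 2 ≤ ‖u - ((t : ℂ) * I) • v‖ ^ 2 := by
        gcongr
        exact (norm_inner_le_norm _ _).trans_eq (by rw [hw, mul_one])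
    _ = 2 + 2 * t * (⟪u, v⟫).im := by
        rw [norm_sub_ofReal_mul_I_smul_sq, hu, hv, ht]
        ring

end

theorem maccone_pati_product_general
    {E : Type*} [NormedAddCommGroup E] [InnerProductSpace ℂ E]
    (A B : E →ₗ[ℂ] E)
    (hA : ∀ x y : E, ⟪A x, y⟫ = ⟪x, A y⟫)
    (hB : ∀ x y : E, ⟪B x, y⟫ = ⟪x, B y⟫)
    (ψ ψp : E) (hψ : ‖ψ‖ = 1) (hψp : ‖ψp‖ = 1) (horth : ⟪ψ, ψp⟫ = 0)
    (hΔA : 0 < sdev A ψ) (hΔB : 0 < sdev B ψ)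
    (s : ℝ) (hs : s = 1 ∨ s = -1)
    (hden : 0 < 1 - (1 / 2) *
      (‖⟪ψ, ((sdev A ψ : ℂ))⁻¹ • A ψp
        + ((s : ℂ) * Complex.I) • (((sdev B ψ : ℂ))⁻¹ • B ψp)⟫‖) ^ 2) :
    sdev A ψ * sdev B ψ ≥
      (s * (Complex.I / 2 * ⟪ψ, A (B ψ) - B (A ψ)⟫).re) /
        (1 - (1 / 2) *
          (‖⟪ψ, ((sdev A ψ : ℂ))⁻¹ • A ψp
            + ((s : ℂ) * Complex.I) • (((sdev B ψ : ℂ))⁻¹ • B ψp)⟫‖) ^ 2) := by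
  set ΔA := sdev A ψ
  set ΔB := sdev B ψ
  set u := ((ΔA : ℂ))⁻¹ • deviation A ψ
  set v := ((ΔB : ℂ))⁻¹ • deviation B ψ
  have hproj : ⟪ψ, ((ΔA : ℂ))⁻¹ • A ψp + ((s : ℂ) * I) • (((ΔB : ℂ))⁻¹ • B ψp)⟫
      = ⟪u - ((s : ℂ) * I) • v, ψp⟫ := by
    simp only [u, v, inner_sub_left, inner_add_right, inner_smul_left, inner_smul_right,
      inner_deviation_left_of_inner_eq_zero hA horth,
      inner_deviation_left_of_inner_eq_zero hB horth, map_mul, map_inv₀, conj_ofReal, conj_I]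
    ring
  have hcov : (⟪ψ, A (B ψ)⟫).im = ΔA * ΔB * (⟪u, v⟫).im := by
    rw [inner_smul_left, inner_smul_right, map_inv₀, conj_ofReal, ← mul_assoc, ← ofReal_inv,
      ← ofReal_inv, ← ofReal_mul, im_ofReal_mul, im_inner_deviation_deviation hA hB hψ]
    field_simp
  have hCS : ‖⟪u - ((s : ℂ) * I) • v, ψp⟫‖ ^ 2 ≤ 2 + 2 * s * (⟪u, v⟫).im :=
    norm_inner_sub_ofReal_mul_I_smul_sq_le (norm_inv_sdev_smul_deviation hA hψ hΔA)
      (norm_inv_sdev_smul_deviation hB hψ hΔB) hψp (by rcases hs with rfl | rfl <;> norm_num)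
  rw [hproj, re_I_div_two_mul_inner_commutator hA hB, hcov, ge_iff_le,
    div_le_iff₀ (hproj ▸ hden)]
  linarith [mul_le_mul_of_nonneg_left hCS (mul_pos hΔA hΔB).le]

/-- Maccone–Pati strengthened product uncertainty relation:
ΔA·ΔB ≥ (±(i/2)⟨ψ,[A,B]ψ⟩) / (1 − (1/2)|⟨ψ,(A/ΔA ± iB/ΔB)ψ⊥⟩|²). -/
theorem maccone_pati_product
    {E : Type*} [NormedAddCommGroup E] [InnerProductSpace ℂ E]
    (A B : E →ₗ[ℂ] E)
    (hA : ∀ x y : E, ⟪A x, y⟫ = ⟪x, A y⟫)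
    (hB : ∀ x y : E, ⟪B x, y⟫ = ⟪x, B y⟫)
    (ψ ψp : E) (hψ : ‖ψ‖ = 1) (hψp : ‖ψp‖ = 1) (horth : ⟪ψ, ψp⟫ = 0)
    (hΔA : 0 < sdev A ψ) (hΔB : 0 < sdev B ψ)
    (s : ℝ) (hs : s = 1 ∨ s = -1)
    (hnum : 0 ≤ s * (Complex.I / 2 * ⟪ψ, A (B ψ) - B (A ψ)⟫).re)
    (hden : 0 < 1 - (1 / 2) *
      (‖⟪ψ, ((sdev A ψ : ℂ))⁻¹ • A ψp
        + ((s : ℂ) * Complex.I) • (((sdev B ψ : ℂ))⁻¹ • B ψp)⟫‖) ^ 2) :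
    sdev A ψ * sdev B ψ ≥
      (s * (Complex.I / 2 * ⟪ψ, A (B ψ) - B (A ψ)⟫).re) /
        (1 - (1 / 2) *
          (‖⟪ψ, ((sdev A ψ : ℂ))⁻¹ • A ψp
            + ((s : ℂ) * Complex.I) • (((sdev B ψ : ℂ))⁻¹ • B ψp)⟫‖) ^ 2) :=
  maccone_pati_product_general A B hA hB ψ ψp hψ hψp horth hΔA hΔB s hs hden
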